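/- Let m, n be positive integers and let P be an m×n real matrix with nonnegative entries such that every row of P sums to 1/m and every column of P sums to 1/n. Set τ = 1/(2·min(m,n)) and define the selected set S = {(i,j) : P(i,j) > τ}. Then S is a one-to-one correspondence (the graph of a partial injection): whenever (i,j) ∈ S and (i,j') ∈ S one has j = j', and whenever (i,j) ∈ S and (i',j) ∈ S one has i = i'. -/

import Mathlib

/-! Two entries of a nonnegative row that both exceed `τ` already sum to more than `2τ`, and
`2τ = 1 / min m n` is at least the row sum `1 / m`; so a row holds at most one selected entry.
Columns are the rows of the transposed plan, with `min n m = min m n`. -/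

open Finset

theorem Fintype.eq_of_sum_lt_add {ι N : Type*} [Fintype ι] [AddCommMonoid N] [Preorder N]
    [AddLeftMono N] {f : ι → N} (hf : ∀ k, 0 ≤ f k) {i j : ι} (h : ∑ k, f k < f i + f j) :
    i = j :=
  by_contra fun hij ↦ not_lt_of_ge (add_le_sum (fun k _ ↦ hf k) (mem_univ i) (mem_univ j) hij) h

theorem one_div_le_two_mul_threshold {m n : ℕ} (hm : 0 < m) (hn : 0 < n) :
    (1 : ℝ) / m ≤ 2 * (1 / (2 * min m n)) := by
  have hmin : (0 : ℝ) < (min m n : ℕ) := by exact_mod_cast lt_min hm hn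
  calc (1 : ℝ) / m ≤ 1 / (min m n : ℕ) :=
        one_div_le_one_div_of_le hmin (by exact_mod_cast min_le_left m n)
    _ = 2 * (1 / (2 * min m n)) := by field_simp

theorem eq_of_threshold_lt_of_sum_row_eq {m n : ℕ} {P : Fin m → Fin n → ℝ}
    (hP : ∀ i j, 0 ≤ P i j) (hrow : ∀ i, ∑ j, P i j = 1 / m) (i : Fin m) {j j' : Fin n}
    (hj : 1 / (2 * min m n) < P i j) (hj' : 1 / (2 * min m n) < P i j') : j = j' := by
  refine Fintype.eq_of_sum_lt_add (hP i) ?_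
  have := one_div_le_two_mul_threshold i.pos j.pos
  rw [hrow]
  linarith

theorem stmt_2_general (m n : ℕ)
    (P : Fin m → Fin n → ℝ)
    (hP : ∀ i j, 0 ≤ P i j)
    (hrow : ∀ i, ∑ j, P i j = 1 / m)
    (hcol : ∀ j, ∑ i, P i j = 1 / n) :
    (∀ (i : Fin m) (j j' : Fin n),
        P i j > 1 / (2 * min m n) → P i j' > 1 / (2 * min m n) → j = j') ∧
    (∀ (i i' : Fin m) (j : Fin n),
        P i j > 1 / (2 * min m n) → P i' j > 1 / (2 * min m n) → i = i') := by
  refine ⟨fun i _ _ ↦ eq_of_threshold_lt_of_sum_row_eq hP hrow i, fun _ _ j hi hi' ↦ ?_⟩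
  rw [min_comm] at hi hi'
  exact eq_of_threshold_lt_of_sum_row_eq (P := fun j i ↦ P i j) (fun j i ↦ hP i j) hcol j hi hi'

theorem stmt_2 (m n : ℕ) (hm : 0 < m) (hn : 0 < n)
    (P : Fin m → Fin n → ℝ)
    (hP : ∀ i j, 0 ≤ P i j)
    (hrow : ∀ i, ∑ j, P i j = 1 / m)
    (hcol : ∀ j, ∑ i, P i j = 1 / n) :
    (∀ (i : Fin m) (j j' : Fin n),
        P i j > 1 / (2 * min m n) → P i j' > 1 / (2 * min m n) → j = j') ∧
    (∀ (i i' : Fin m) (j : Fin n),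
        P i j > 1 / (2 * min m n) → P i' j > 1 / (2 * min m n) → i = i') :=
  stmt_2_general m n P hP hrow hcol
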